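/- arXiv:math/0201146 — 6 statements merged into one kernel-verified Lean document; each statement's English description precedes it below -/
import Mathlib

section
/- Let v ≤ y ≤ w be sequences of elements of S̄ = S ∪ {1} (the simple reflections together with the identity) of the same length r, and let Y_{w,v} ⊂ Y(T) be the sublattice generated by the coweights β^∨_{w,v,i} = s₁⋯s_{i−1}(α^∨_{w,v,i}), where α_{w,v,i} is the simple root attached to the i-th entry of w when the i-th entries of w and v differ, and 0 otherwise. Then (w − y)·Y(T) ⊆ Y_{w,v}, where w and y act on Y(T) as products of the corresponding simple reflections. -/
/-! Setting: `G` is a connected reductive group with maximal torus `T`, Weyl group `W` with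
simple reflections `S`, and cocharacter lattice `Y = Y(T)`.  A sequence
`w = (s₁, …, s_r)` of elements of `S̄ = S ∪ {1}` is modelled by the `ℤ`-linear
endomorphisms `s i` of `Y` given by the action of its entries (satisfying the reflection
identity `s i x - x ∈ ℤ • α i`, where `α i = α^∨_{w,i}` is the coroot of the `i`-th entry,
taken to be `0` when the entry is `1`), and a subsequence `v ≤ w` is modelled by a Boolean
mask (`true` = entry of `w`, `false` = `1`). -/

namespace DLStmt2

variable {Y : Type*} [AddCommGroup Y] [Module ℤ Y] {r : ℕ}

/-- The `i`-th entry of the masked sequence: `s i` if the mask is `true`, `1` otherwise. -/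
def entry (s : Fin r → Module.End ℤ Y) (b : Fin r → Bool) (i : Fin r) : Module.End ℤ Y :=
  if b i then s i else 1

/-- The partial product `s₁ ⋯ s_{i-1}` of the masked sequence (first `i` entries). -/
def prefixProd (s : Fin r → Module.End ℤ Y) (b : Fin r → Bool) (i : Fin r) :
    Module.End ℤ Y :=
  ((List.ofFn (entry s b)).take i).prod

/-- The product `s₁ ⋯ s_r` of the masked sequence, i.e. the action of the corresponding
Weyl group element on `Y(T)`. -/
def seqProd (s : Fin r → Module.End ℤ Y) (b : Fin r → Bool) : Module.End ℤ Y :=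
  (List.ofFn (entry s b)).prod

/-- `α^∨_{w,v,i}`: the coroot `α i` if the `i`-th entries of the two masked sequences
differ, and `0` otherwise. -/
def alphaD (α : Fin r → Y) (bw bv : Fin r → Bool) (i : Fin r) : Y :=
  if bw i = bv i then 0 else α i

/-- `β^∨_{w,v,i} = s₁ ⋯ s_{i-1} (α^∨_{w,v,i})`. -/
def betaD (s : Fin r → Module.End ℤ Y) (α : Fin r → Y) (bw bv : Fin r → Bool)
    (i : Fin r) : Y :=
  prefixProd s bw i (alphaD α bw bv i)

/-- The sublattice `Y_{w,v} ⊆ Y(T)` generated by the `β^∨_{w,v,i}`. -/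
def latt (s : Fin r → Module.End ℤ Y) (α : Fin r → Y) (bw bv : Fin r → Bool) :
    Submodule ℤ Y :=
  Submodule.span ℤ (Set.range (betaD s α bw bv))


lemma entry_tail {n : ℕ} (s : Fin (n+1) → Module.End ℤ Y) (b : Fin (n+1) → Bool) :
    (fun i : Fin n => entry s b i.succ) = entry (Fin.tail s) (Fin.tail b) := rfl

lemma seqProd_succ {n : ℕ} (s : Fin (n+1) → Module.End ℤ Y) (b : Fin (n+1) → Bool) :
    seqProd s b = entry s b 0 * seqProd (Fin.tail s) (Fin.tail b) := by
  simp [seqProd, List.ofFn_succ, entry_tail]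

lemma betaD_succ {n : ℕ} (s : Fin (n+1) → Module.End ℤ Y) (α : Fin (n+1) → Y)
    (bw bv : Fin (n+1) → Bool) (i : Fin n) :
    betaD s α bw bv i.succ =
      entry s bw 0 (betaD (Fin.tail s) (Fin.tail α) (Fin.tail bw) (Fin.tail bv) i) := by
  have h : alphaD α bw bv i.succ
      = alphaD (Fin.tail α) (Fin.tail bw) (Fin.tail bv) i := rfl
  unfold betaD prefixProd
  rw [h, List.ofFn_succ, Fin.val_succ, List.take_succ_cons, List.prod_cons,
    Module.End.mul_apply, entry_tail]

lemma betaD_zero {n : ℕ} (s : Fin (n+1) → Module.End ℤ Y) (α : Fin (n+1) → Y)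
    (bw bv : Fin (n+1) → Bool) :
    betaD s α bw bv 0 = alphaD α bw bv 0 := by
  simp [betaD, prefixProd]

/-- Let `v ≤ y ≤ w` be sequences of elements of `S̄ = S ∪ {1}` of the same length `r`
(here `w` is the full sequence, `y`, `v` are given by masks `bY`, `bv` with `bv ≤ bY`),
and let `Y_{w,v} ⊆ Y(T)` be the sublattice generated by the coweights
`β^∨_{w,v,i} = s₁⋯s_{i−1}(α^∨_{w,v,i})`.  Then `(w − y)·Y(T) ⊆ Y_{w,v}`, where `w` and
`y` act on `Y(T)` as products of the corresponding simple reflections. -/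
theorem statement2 (s : Fin r → Module.End ℤ Y) (α : Fin r → Y)
    -- reflection identity: `(s_i - 1) Y(T) ⊆ ℤ α^∨_{w,i}`
    (hrefl : ∀ (i : Fin r) (x : Y), ∃ n : ℤ, s i x - x = n • α i)
    -- the coroot attached to a trivial entry is `0`
    (hα0 : ∀ i : Fin r, s i = 1 → α i = 0)
    (bv bY : Fin r → Bool) (hvy : ∀ i, bv i ≤ bY i) :
    ∀ x : Y,
      seqProd s (fun _ => true) x - seqProd s bY x ∈ latt s α (fun _ => true) bv := by
  induction r with
  | zero =>
    intro x
    have h0 : seqProd s (fun _ => true) x - seqProd s bY x = 0 := sub_self _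
    rw [h0]
    exact Submodule.zero_mem _
  | succ n ih =>
    intro x
    set st := Fin.tail s with hst
    have hmap : ∀ z ∈ latt st (Fin.tail α) (fun _ => true) (Fin.tail bv),
        s 0 z ∈ latt s α (fun _ => true) bv := by
      intro z hz
      have hle : latt st (Fin.tail α) (fun _ => true) (Fin.tail bv) ≤
          Submodule.comap (s 0) (latt s α (fun _ => true) bv) := by
        rw [latt]
        apply Submodule.span_le.mpr
        rintro _ ⟨i, rfl⟩
        simp only [SetLike.mem_coe, Submodule.mem_comap]
        have hb : betaD s α (fun _ => true) bv i.succ =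
            s 0 (betaD st (Fin.tail α) (fun _ => true) (Fin.tail bv) i) := by
          rw [betaD_succ]
          rfl
        rw [← hb]
        exact Submodule.subset_span ⟨i.succ, rfl⟩
      exact hle hz
    have hd := ih st (Fin.tail α) (fun i x => hrefl i.succ x) (fun i h => hα0 i.succ h)
      (Fin.tail bv) (Fin.tail bY) (fun i => hvy i.succ) x
    have h1 : seqProd s (fun _ => true) x = s 0 (seqProd st (fun _ => true) x) := by
      rw [seqProd_succ]; rfl
    have h2 : seqProd s bY x = entry s bY 0 (seqProd st (Fin.tail bY) x) := by
      rw [seqProd_succ]; rfl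
    set A := seqProd st (fun _ => true) x with hA
    set B := seqProd st (Fin.tail bY) x with hB
    have hsplit : seqProd s (fun _ => true) x - seqProd s bY x
        = s 0 (A - B) + (s 0 B - entry s bY 0 B) := by
      rw [h1, h2, map_sub]; abel
    rw [hsplit]
    refine Submodule.add_mem _ (hmap _ hd) ?_
    cases hb0 : bY 0 with
    | false =>
      have hbv0 : bv 0 = false := by
        have h := hvy 0
        rw [hb0] at h
        exact le_bot_iff.mp h
      obtain ⟨m, hm⟩ := hrefl 0 B
      have heq : s 0 B - entry s bY 0 B = m • α 0 := by
        simpa [entry, hb0] using hm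
      rw [heq]
      have hβ : betaD s α (fun _ => true) bv 0 = α 0 := by
        rw [betaD_zero]; simp [alphaD, hbv0]
      have hmem : α 0 ∈ latt s α (fun _ => true) bv := by
        rw [← hβ]; exact Submodule.subset_span ⟨0, rfl⟩
      exact (latt s α (fun _ => true) bv).toAddSubgroup.zsmul_mem hmem m
    | true =>
      have heq : s 0 B - entry s bY 0 B = 0 := by
        simp [entry, hb0]
      rw [heq]
      exact Submodule.zero_mem _


end DLStmt2
end

section
/- With the notation above, the lattice Y_{w,v} is also generated by the family (t₁⋯t_{i−1}(α^∨_{w,v,i}))_{1≤i≤r}, where y = (t₁,…,t_r) is any sequence with v ≤ y ≤ w. -/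
/-! Setting as in the companion statements: `G` is a connected reductive group with
maximal torus `T`, Weyl group `W` with simple reflections `S`, and cocharacter lattice
`Y = Y(T)`.  A sequence `w = (s₁, …, s_r)` of elements of `S̄ = S ∪ {1}` is modelled by
`ℤ`-linear endomorphisms `s i` of `Y` satisfying the reflection identity
`s i x - x ∈ ℤ • α i` (`α i` the coroot of the `i`-th entry, `0` for a trivial entry);
subsequences `v ≤ y ≤ w` are Boolean masks (`true` = entry of `w`, `false` = `1`). -/

namespace DLStmt3

variable {Y : Type*} [AddCommGroup Y] [Module ℤ Y] {r : ℕ}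

/-- The `i`-th entry of the masked sequence: `s i` if the mask is `true`, `1` otherwise. -/
def entry (s : Fin r → Module.End ℤ Y) (b : Fin r → Bool) (i : Fin r) : Module.End ℤ Y :=
  if b i then s i else 1

/-- The partial product `s₁ ⋯ s_{i-1}` of the masked sequence (first `i` entries). -/
def prefixProd (s : Fin r → Module.End ℤ Y) (b : Fin r → Bool) (i : Fin r) :
    Module.End ℤ Y :=
  ((List.ofFn (entry s b)).take i).prod

/-- The product `s₁ ⋯ s_r` of the masked sequence, i.e. the action of the corresponding
Weyl group element on `Y(T)`. -/
def seqProd (s : Fin r → Module.End ℤ Y) (b : Fin r → Bool) : Module.End ℤ Y :=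
  (List.ofFn (entry s b)).prod

/-- `α^∨_{w,v,i}`: the coroot `α i` if the `i`-th entries of the two masked sequences
differ, and `0` otherwise. -/
def alphaD (α : Fin r → Y) (bw bv : Fin r → Bool) (i : Fin r) : Y :=
  if bw i = bv i then 0 else α i

/-- `β^∨_{w,v,i} = s₁ ⋯ s_{i-1} (α^∨_{w,v,i})`. -/
def betaD (s : Fin r → Module.End ℤ Y) (α : Fin r → Y) (bw bv : Fin r → Bool)
    (i : Fin r) : Y :=
  prefixProd s bw i (alphaD α bw bv i)

/-- The sublattice `Y_{w,v} ⊆ Y(T)` generated by the `β^∨_{w,v,i}`. -/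
def latt (s : Fin r → Module.End ℤ Y) (α : Fin r → Y) (bw bv : Fin r → Bool) :
    Submodule ℤ Y :=
  Submodule.span ℤ (Set.range (betaD s α bw bv))

/-! `β^∨_{w,v,i}` and `t₁⋯t_{i−1}(α^∨_{w,v,i})` differ by `(s₁⋯s_{i−1} − t₁⋯t_{i−1})(α^∨_{w,v,i})`,
which lies in the span of the `β^∨_{w,y,j}`, `j < i`, hence in that of the `β^∨_{w,v,j}`, `j < i`.
So the two families are related by a unitriangular change of generators. -/

theorem _root_.Submodule.span_range_eq_of_sub_mem_span_Iio {R M ι : Type*} [Ring R]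
    [AddCommGroup M] [Module R M] [Preorder ι] [WellFoundedLT ι] {f g : ι → M}
    (h : ∀ i, f i - g i ∈ Submodule.span R (f '' Set.Iio i)) :
    Submodule.span R (Set.range f) = Submodule.span R (Set.range g) := by
  apply le_antisymm
  · rw [Submodule.span_le]
    rintro _ ⟨i, rfl⟩
    induction i using WellFoundedLT.induction with
    | _ i ih =>
      have hlower : Submodule.span R (f '' Set.Iio i) ≤ Submodule.span R (Set.range g) :=
        Submodule.span_le.2 (by rintro _ ⟨j, hj, rfl⟩; exact ih j hj)
      have := Submodule.add_mem _ (Submodule.subset_span (Set.mem_range_self i)) (hlower (h i))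
      rwa [add_sub_cancel] at this
  · rw [Submodule.span_le]
    rintro _ ⟨i, rfl⟩
    have := Submodule.sub_mem _ (Submodule.subset_span (Set.mem_range_self i))
      (Submodule.span_mono (Set.image_subset_range _ _) (h i))
    rwa [sub_sub_cancel] at this

theorem prod_take_succ_ofFn {M : Type*} [Monoid M] (f : Fin r → M) (n : ℕ) (hn : n < r) :
    ((List.ofFn f).take (n + 1)).prod = ((List.ofFn f).take n).prod * f ⟨n, hn⟩ := by
  rw [List.prod_take_succ _ n (by simpa using hn), List.getElem_ofFn]

theorem entry_sub_entry_eq_zsmul_alphaD (s : Fin r → Module.End ℤ Y) (α : Fin r → Y)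
    (hrefl : ∀ (i : Fin r) (x : Y), ∃ n : ℤ, s i x - x = n • α i)
    (b' b : Fin r → Bool) (i : Fin r) (x : Y) :
    ∃ m : ℤ, entry s b' i x - entry s b i x = m • alphaD α b' b i := by
  obtain ⟨m, hm⟩ := hrefl i x
  unfold entry alphaD
  cases b' i <;> cases b i
  · exact ⟨0, by simp⟩
  · exact ⟨-m, by simp [← hm]⟩
  · exact ⟨m, by simpa using hm⟩
  · exact ⟨0, by simp⟩

/-- At each step the two entries differ on `x` by an integer multiple of `α^∨_{b',b,j}` (the
reflection identity), which the common prefix product carries to a multiple of `β^∨_{b',b,j}`. -/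
theorem prod_take_sub_mem_span_betaD (s : Fin r → Module.End ℤ Y) (α : Fin r → Y)
    (hrefl : ∀ (i : Fin r) (x : Y), ∃ n : ℤ, s i x - x = n • α i)
    (b' b : Fin r → Bool) (n : ℕ) (hn : n ≤ r) (x : Y) :
    ((List.ofFn (entry s b')).take n).prod x - ((List.ofFn (entry s b)).take n).prod x ∈
      Submodule.span ℤ (betaD s α b' b '' {j | (j : ℕ) < n}) := by
  induction n generalizing x with
  | zero => simp
  | succ n ih =>
    have hn' : n < r := hn
    set P' := ((List.ofFn (entry s b')).take n).prod
    set P := ((List.ofFn (entry s b)).take n).prod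
    set i : Fin r := ⟨n, hn'⟩
    obtain ⟨m, hm⟩ := entry_sub_entry_eq_zsmul_alphaD s α hrefl b' b i x
    have hsplit : P' (entry s b' i x) - P (entry s b i x) =
        m • betaD s α b' b i + (P' (entry s b i x) - P (entry s b i x)) := by
      rw [betaD, prefixProd, ← map_zsmul, ← hm, map_sub]
      abel
    have hmono : Submodule.span ℤ (betaD s α b' b '' {j | (j : ℕ) < n}) ≤
        Submodule.span ℤ (betaD s α b' b '' {j | (j : ℕ) < n + 1}) :=
      Submodule.span_mono (Set.image_mono fun j (hj : (j : ℕ) < n) => Nat.lt_succ_of_lt hj)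
    rw [prod_take_succ_ofFn _ n hn', prod_take_succ_ofFn _ n hn']
    refine hsplit ▸ Submodule.add_mem _ (zsmul_mem ?_ m) (hmono (ih hn'.le _))
    exact Submodule.subset_span ⟨i, Nat.lt_succ_self n, rfl⟩

theorem span_betaD_image_le_of_le (s : Fin r → Module.End ℤ Y) (α : Fin r → Y)
    {bv bY : Fin r → Bool} (hvy : ∀ i, bv i ≤ bY i) (S : Set (Fin r)) :
    Submodule.span ℤ (betaD s α (fun _ => true) bY '' S) ≤
      Submodule.span ℤ (betaD s α (fun _ => true) bv '' S) := by
  rw [Submodule.span_le]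
  rintro _ ⟨j, hj, rfl⟩
  cases hY : bY j
  · have hv : bv j = false := Bool.eq_false_iff.2 fun h => absurd (hvy j) (by simp [hY, h])
    exact Submodule.subset_span ⟨j, hj, by simp [betaD, alphaD, hY, hv]⟩
  · simp [betaD, alphaD, hY]

theorem statement3_general (s : Fin r → Module.End ℤ Y) (α : Fin r → Y)
    (hrefl : ∀ (i : Fin r) (x : Y), ∃ n : ℤ, s i x - x = n • α i)
    (bv bY : Fin r → Bool) (hvy : ∀ i, bv i ≤ bY i) :
    latt s α (fun _ => true) bv =
      Submodule.span ℤ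
        (Set.range fun i : Fin r =>
          prefixProd s bY i (alphaD α (fun _ => true) bv i)) :=
  Submodule.span_range_eq_of_sub_mem_span_Iio fun i =>
    span_betaD_image_le_of_le s α hvy _
      (prod_take_sub_mem_span_betaD s α hrefl _ bY i i.2.le _)

/-- With the notation above, the lattice `Y_{w,v}` is also generated by the family
`(t₁⋯t_{i−1}(α^∨_{w,v,i}))_{1≤i≤r}`, where `y = (t₁,…,t_r)` is any sequence with
`v ≤ y ≤ w`. -/
theorem statement3 (s : Fin r → Module.End ℤ Y) (α : Fin r → Y)
    (hrefl : ∀ (i : Fin r) (x : Y), ∃ n : ℤ, s i x - x = n • α i)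
    (hα0 : ∀ i : Fin r, s i = 1 → α i = 0)
    (bv bY : Fin r → Bool) (hvy : ∀ i, bv i ≤ bY i) :
    latt s α (fun _ => true) bv =
      Submodule.span ℤ
        (Set.range fun i : Fin r =>
          prefixProd s bY i (alphaD α (fun _ => true) bv i)) :=
  statement3_general s α hrefl bv bY hvy

end DLStmt3
end

section
/- With v ≤ y ≤ w sequences in S̄, one has the equality of sublattices (wF − 1)·Y(T) + Y_{w,v} = (vF − 1)·Y(T) + Y_{w,v} of Y(T); consequently, the norm maps N_w and N_y induce a canonical isomorphism T^{wF}/N_w(Y_{w,v}) ≅ T^{yF}/N_y(Y_{w,v}). -/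
/-! Setting as in the companion statements: `G` is a connected reductive group with
`F`-stable maximal torus `T` and cocharacter lattice `Y = Y(T)`.  A sequence
`w = (s₁, …, s_r)` of elements of `S̄ = S ∪ {1}` is modelled by `ℤ`-linear
endomorphisms `s i` of `Y` satisfying `s i x - x ∈ ℤ • α i`; subsequences are Boolean
masks.  The isogeny `F` acts on `Y(T)` by the endomorphism `F`, so the twisted
endomorphism `wF` of `Y(T)` is `seqProd s b * F`.

By the exact sequence `0 → Y(T) → Y(T) → T^{wF} → 0` of Statement 1 (with `N_w`
surjective with kernel `(wF−1)Y(T)`), the quotient `T^{wF}/N_w(Y_{w,v})` is canonically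
`Y(T)/((wF−1)Y(T) + Y_{w,v})`; this is how the second assertion is phrased below. -/

namespace DLStmt4

variable {Y : Type*} [AddCommGroup Y] [Module ℤ Y] {r : ℕ}

/-- The `i`-th entry of the masked sequence: `s i` if the mask is `true`, `1` otherwise. -/
def entry (s : Fin r → Module.End ℤ Y) (b : Fin r → Bool) (i : Fin r) : Module.End ℤ Y :=
  if b i then s i else 1

/-- The partial product `s₁ ⋯ s_{i-1}` of the masked sequence (first `i` entries). -/
def prefixProd (s : Fin r → Module.End ℤ Y) (b : Fin r → Bool) (i : Fin r) :
    Module.End ℤ Y :=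
  ((List.ofFn (entry s b)).take i).prod

/-- The product `s₁ ⋯ s_r` of the masked sequence, i.e. the action of the corresponding
Weyl group element on `Y(T)`. -/
def seqProd (s : Fin r → Module.End ℤ Y) (b : Fin r → Bool) : Module.End ℤ Y :=
  (List.ofFn (entry s b)).prod

/-- `α^∨_{w,v,i}`: the coroot `α i` if the `i`-th entries of the two masked sequences
differ, and `0` otherwise. -/
def alphaD (α : Fin r → Y) (bw bv : Fin r → Bool) (i : Fin r) : Y :=
  if bw i = bv i then 0 else α i

/-- `β^∨_{w,v,i} = s₁ ⋯ s_{i-1} (α^∨_{w,v,i})`. -/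
def betaD (s : Fin r → Module.End ℤ Y) (α : Fin r → Y) (bw bv : Fin r → Bool)
    (i : Fin r) : Y :=
  prefixProd s bw i (alphaD α bw bv i)

/-- The sublattice `Y_{w,v} ⊆ Y(T)` generated by the `β^∨_{w,v,i}`. -/
def latt (s : Fin r → Module.End ℤ Y) (α : Fin r → Y) (bw bv : Fin r → Bool) :
    Submodule ℤ Y :=
  Submodule.span ℤ (Set.range (betaD s α bw bv))

section

variable {R M : Type*} [Ring R] [AddCommGroup M] [Module R M]

theorem _root_.Module.End.range_mul_sub_one_sup_le {A B : Module.End R M} (F : Module.End R M)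
    {L : Submodule R M} (h : ∀ y, A y - B y ∈ L) :
    LinearMap.range (A * F - 1) ⊔ L ≤ LinearMap.range (B * F - 1) ⊔ L := by
  refine sup_le ?_ le_sup_right
  rintro _ ⟨z, rfl⟩
  have hz : (A * F - 1) z = (B * F - 1) z + (A (F z) - B (F z)) := by simp
  rw [hz]
  exact add_mem (Submodule.mem_sup_left ⟨z, rfl⟩) (Submodule.mem_sup_right (h _))

theorem _root_.Module.End.range_mul_sub_one_sup_eq {A B : Module.End R M} (F : Module.End R M)
    {L : Submodule R M} (h : ∀ y, A y - B y ∈ L) :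
    LinearMap.range (A * F - 1) ⊔ L = LinearMap.range (B * F - 1) ⊔ L :=
  le_antisymm (Module.End.range_mul_sub_one_sup_le F h)
    (Module.End.range_mul_sub_one_sup_le F fun y => neg_sub (A y) (B y) ▸ L.neg_mem (h y))

end

section

variable (s : Fin r → Module.End ℤ Y) (α : Fin r → Y)

theorem entry_sub_entry_eq_zsmul_alphaD
    (hrefl : ∀ (i : Fin r) (x : Y), ∃ n : ℤ, s i x - x = n • α i)
    {bw b bv : Fin r → Bool} (hvb : ∀ i, bv i ≤ b i) (hbw : ∀ i, b i ≤ bw i) (i : Fin r) (y : Y) :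
    ∃ n : ℤ, entry s bw i y - entry s b i y = n • alphaD α bw bv i := by
  by_cases hi : bw i = b i
  · exact ⟨0, by simp [entry, hi]⟩
  · obtain ⟨hbwi, hbi, hbvi⟩ : bw i = true ∧ b i = false ∧ bv i = false := by
      have hvbi := hvb i
      have hbwi := hbw i
      revert hi hvbi hbwi
      cases bw i <;> cases b i <;> cases bv i <;> decide
    simpa [entry, alphaD, hbwi, hbi, hbvi] using hrefl i y

/- Where the masks differ, `s i y - y ∈ ℤ α i`; the prefix of `bw` sends `α i` to the generator
`β i` of `latt`, and the prefix of `b` agrees with it modulo `latt` by induction. -/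
theorem prod_take_entry_sub_mem_latt
    (hrefl : ∀ (i : Fin r) (x : Y), ∃ n : ℤ, s i x - x = n • α i)
    {bw b bv : Fin r → Bool} (hvb : ∀ i, bv i ≤ b i) (hbw : ∀ i, b i ≤ bw i) :
    ∀ k ≤ r, ∀ y : Y, ((List.ofFn (entry s bw)).take k).prod y
      - ((List.ofFn (entry s b)).take k).prod y ∈ latt s α bw bv := by
  intro k
  induction k with
  | zero => simp
  | succ k ih =>
    intro hk y
    have hkr : k < r := hk
    set P := ((List.ofFn (entry s bw)).take k).prod
    set Q := ((List.ofFn (entry s b)).take k).prod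
    have hPQ : ∀ y, P y - Q y ∈ latt s α bw bv := ih hkr.le
    set i : Fin r := ⟨k, hkr⟩
    have hβ : P (alphaD α bw bv i) ∈ latt s α bw bv := Submodule.subset_span ⟨i, rfl⟩
    have hQα : Q (alphaD α bw bv i) ∈ latt s α bw bv := by
      simpa using sub_mem hβ (hPQ (alphaD α bw bv i))
    obtain ⟨n, hn⟩ := entry_sub_entry_eq_zsmul_alphaD s α hrefl hvb hbw i y
    have hsplit : P (entry s bw i y) - Q (entry s b i y)
        = (P (entry s bw i y) - Q (entry s bw i y)) + n • Q (alphaD α bw bv i) := by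
      rw [← map_zsmul, ← hn, map_sub]
      abel
    have hlen : ∀ b' : Fin r → Bool, k < (List.ofFn (entry s b')).length := by simpa using hkr
    simp only [List.prod_take_succ _ _ (hlen _), List.getElem_ofFn, Module.End.mul_apply]
    rw [hsplit]
    exact add_mem (hPQ _) (Submodule.smul_of_tower_mem _ n hQα)

theorem seqProd_sub_mem_latt
    (hrefl : ∀ (i : Fin r) (x : Y), ∃ n : ℤ, s i x - x = n • α i)
    {bw b bv : Fin r → Bool} (hvb : ∀ i, bv i ≤ b i) (hbw : ∀ i, b i ≤ bw i) (y : Y) :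
    seqProd s bw y - seqProd s b y ∈ latt s α bw bv := by
  have htake : ∀ b', (List.ofFn (entry s b')).take r = List.ofFn (entry s b') := fun _ =>
    List.take_of_length_le (by simp)
  simpa only [seqProd, htake] using prod_take_entry_sub_mem_latt s α hrefl hvb hbw r le_rfl y

end

theorem statement4_general (s : Fin r → Module.End ℤ Y) (α : Fin r → Y)
    (hrefl : ∀ (i : Fin r) (x : Y), ∃ n : ℤ, s i x - x = n • α i)
    (F : Module.End ℤ Y)
    (bv bY : Fin r → Bool) (hvy : ∀ i, bv i ≤ bY i) :
    (LinearMap.range (seqProd s (fun _ => true) * F - 1) ⊔ latt s α (fun _ => true) bv =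
       LinearMap.range (seqProd s bv * F - 1) ⊔ latt s α (fun _ => true) bv) ∧
    ∃ e : (Y ⧸ (LinearMap.range (seqProd s (fun _ => true) * F - 1) ⊔
              latt s α (fun _ => true) bv)) ≃ₗ[ℤ]
          (Y ⧸ (LinearMap.range (seqProd s bY * F - 1) ⊔
              latt s α (fun _ => true) bv)),
      ∀ x : Y, e (Submodule.Quotient.mk x) = Submodule.Quotient.mk x := by
  have hsup : ∀ b : Fin r → Bool, (∀ i, bv i ≤ b i) →
      LinearMap.range (seqProd s (fun _ => true) * F - 1) ⊔ latt s α (fun _ => true) bv =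
        LinearMap.range (seqProd s b * F - 1) ⊔ latt s α (fun _ => true) bv := fun b hb =>
    Module.End.range_mul_sub_one_sup_eq F
      (seqProd_sub_mem_latt s α hrefl hb fun i => Bool.le_true (b i))
  refine ⟨hsup bv fun _ => le_rfl, ?_⟩
  rw [← hsup bY hvy]
  exact ⟨LinearEquiv.refl ℤ _, fun _ => rfl⟩

/-- With `v ≤ y ≤ w` sequences in `S̄`, one has the equality of sublattices
`(wF − 1)·Y(T) + Y_{w,v} = (vF − 1)·Y(T) + Y_{w,v}` of `Y(T)`; consequently, the norm
maps `N_w` and `N_y` induce a canonical isomorphism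
`T^{wF}/N_w(Y_{w,v}) ≅ T^{yF}/N_y(Y_{w,v})` (expressed here, via the exact sequence of
Statement 1, as the identity-induced isomorphism
`Y/((wF−1)Y + Y_{w,v}) ≅ Y/((yF−1)Y + Y_{w,v})`). -/
theorem statement4 (s : Fin r → Module.End ℤ Y) (α : Fin r → Y)
    (hrefl : ∀ (i : Fin r) (x : Y), ∃ n : ℤ, s i x - x = n • α i)
    (hα0 : ∀ i : Fin r, s i = 1 → α i = 0)
    (F : Module.End ℤ Y)
    (bv bY : Fin r → Bool) (hvy : ∀ i, bv i ≤ bY i) :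
    (LinearMap.range (seqProd s (fun _ => true) * F - 1) ⊔ latt s α (fun _ => true) bv =
       LinearMap.range (seqProd s bv * F - 1) ⊔ latt s α (fun _ => true) bv) ∧
    ∃ e : (Y ⧸ (LinearMap.range (seqProd s (fun _ => true) * F - 1) ⊔
              latt s α (fun _ => true) bv)) ≃ₗ[ℤ]
          (Y ⧸ (LinearMap.range (seqProd s bY * F - 1) ⊔
              latt s α (fun _ => true) bv)),
      ∀ x : Y, e (Submodule.Quotient.mk x) = Submodule.Quotient.mk x :=
  statement4_general s α hrefl F bv bY hvy

end DLStmt4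
end

section
/- For sequences v ≤ x ≤ y ≤ w of elements of S̄, one has Y_{w,v} = Y_{w,y} + Y_{y,v} as sublattices of Y(T). -/
/-! Setting as in the companion statements: `Y = Y(T)` is the cocharacter lattice of a
maximal torus of a connected reductive group; a sequence `w = (s₁, …, s_r)` of elements
of `S̄ = S ∪ {1}` is modelled by `ℤ`-linear endomorphisms `s i` of `Y` satisfying the
reflection identity `s i x - x ∈ ℤ • α i`; subsequences `v ≤ x ≤ y ≤ w` are Boolean
masks, and `I_{w,v} = {i | w_i ≠ v_i}` satisfies `I_{w,v} = I_{w,y} ⊔ I_{y,v}`. -/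

namespace DLStmt5

variable {Y : Type*} [AddCommGroup Y] [Module ℤ Y] {r : ℕ}

/-- The `i`-th entry of the masked sequence: `s i` if the mask is `true`, `1` otherwise. -/
def entry (s : Fin r → Module.End ℤ Y) (b : Fin r → Bool) (i : Fin r) : Module.End ℤ Y :=
  if b i then s i else 1

/-- The partial product `s₁ ⋯ s_{i-1}` of the masked sequence (first `i` entries). -/
def prefixProd (s : Fin r → Module.End ℤ Y) (b : Fin r → Bool) (i : Fin r) :
    Module.End ℤ Y :=
  ((List.ofFn (entry s b)).take i).prod

/-- The product `s₁ ⋯ s_r` of the masked sequence, i.e. the action of the corresponding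
Weyl group element on `Y(T)`. -/
def seqProd (s : Fin r → Module.End ℤ Y) (b : Fin r → Bool) : Module.End ℤ Y :=
  (List.ofFn (entry s b)).prod

/-- `α^∨_{w,v,i}`: the coroot `α i` if the `i`-th entries of the two masked sequences
differ, and `0` otherwise. -/
def alphaD (α : Fin r → Y) (bw bv : Fin r → Bool) (i : Fin r) : Y :=
  if bw i = bv i then 0 else α i

/-- `β^∨_{w,v,i} = s₁ ⋯ s_{i-1} (α^∨_{w,v,i})`. -/
def betaD (s : Fin r → Module.End ℤ Y) (α : Fin r → Y) (bw bv : Fin r → Bool)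
    (i : Fin r) : Y :=
  prefixProd s bw i (alphaD α bw bv i)

/-- The sublattice `Y_{w,v} ⊆ Y(T)` generated by the `β^∨_{w,v,i}`. -/
def latt (s : Fin r → Module.End ℤ Y) (α : Fin r → Y) (bw bv : Fin r → Bool) :
    Submodule ℤ Y :=
  Submodule.span ℤ (Set.range (betaD s α bw bv))

lemma take_succ_prod (f : Fin r → Module.End ℤ Y) (n : ℕ) (h : n < r) :
    ((List.ofFn f).take (n + 1)).prod
      = ((List.ofFn f).take n).prod * f ⟨n, h⟩ := by
  rw [List.take_succ]
  have hget : (List.ofFn f)[n]? = some (f ⟨n, h⟩) := by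
    rw [List.getElem?_eq_getElem (by simpa using h)]
    simp
  rw [hget]
  simp

lemma key (s : Fin r → Module.End ℤ Y) (α : Fin r → Y)
    (hrefl : ∀ (i : Fin r) (x : Y), ∃ n : ℤ, s i x - x = n • α i)
    (bY : Fin r → Bool) (n : ℕ) :
    ∀ (h : n ≤ r) (x : Y),
      ((List.ofFn (entry s (fun _ => true))).take n).prod x
        - ((List.ofFn (entry s bY)).take n).prod x
        ∈ latt s α (fun _ => true) bY := by
  induction n with
  | zero => intro _ x; simp
  | succ n ih =>
    intro h x
    have hn : n < r := h
    rw [take_succ_prod _ n hn, take_succ_prod _ n hn,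
      Module.End.mul_apply, Module.End.mul_apply]
    have hw : entry s (fun _ => true) ⟨n, hn⟩ = s ⟨n, hn⟩ := by simp [entry]
    rw [hw]
    by_cases hb : bY ⟨n, hn⟩ = true
    · rw [show entry s bY ⟨n, hn⟩ = s ⟨n, hn⟩ from by simp [entry, hb]]
      exact ih hn.le _
    · rw [show entry s bY ⟨n, hn⟩ = 1 from by simp [entry, hb],
        Module.End.one_apply]
      obtain ⟨m, hm⟩ := hrefl ⟨n, hn⟩ x
      have hsx : s ⟨n, hn⟩ x = m • α ⟨n, hn⟩ + x := by
        rw [← hm]; abel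
      have hbeta : betaD s α (fun _ => true) bY ⟨n, hn⟩
          = ((List.ofFn (entry s (fun _ => true))).take n).prod (α ⟨n, hn⟩) := by
        simp [betaD, alphaD, prefixProd, hb]
      have heq : ((List.ofFn (entry s (fun _ => true))).take n).prod (s ⟨n, hn⟩ x)
          - ((List.ofFn (entry s bY)).take n).prod x
          = m • ((List.ofFn (entry s (fun _ => true))).take n).prod (α ⟨n, hn⟩)
            + (((List.ofFn (entry s (fun _ => true))).take n).prod x
              - ((List.ofFn (entry s bY)).take n).prod x) := by
        rw [hsx, map_add, map_zsmul]; abel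
      rw [heq]
      refine Submodule.add_mem _ ?_ (ih hn.le x)
      exact AddSubgroup.zsmul_mem (latt s α (fun _ => true) bY).toAddSubgroup
        (Submodule.subset_span (Set.mem_range.mpr ⟨⟨n, hn⟩, hbeta⟩)) m

lemma key' (s : Fin r → Module.End ℤ Y) (α : Fin r → Y)
    (hrefl : ∀ (i : Fin r) (x : Y), ∃ n : ℤ, s i x - x = n • α i)
    (bY : Fin r → Bool) (i : Fin r) (x : Y) :
    prefixProd s (fun _ => true) i x - prefixProd s bY i x
      ∈ latt s α (fun _ => true) bY :=
  key s α hrefl bY i.val i.isLt.le x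

/-- For sequences `v ≤ x ≤ y ≤ w` of elements of `S̄`, one has
`Y_{w,v} = Y_{w,y} + Y_{y,v}` as sublattices of `Y(T)`. -/
theorem statement5 (s : Fin r → Module.End ℤ Y) (α : Fin r → Y)
    (hrefl : ∀ (i : Fin r) (x : Y), ∃ n : ℤ, s i x - x = n • α i)
    (hα0 : ∀ i : Fin r, s i = 1 → α i = 0)
    (bv bx bY : Fin r → Bool)
    (hvx : ∀ i, bv i ≤ bx i) (hxy : ∀ i, bx i ≤ bY i) :
    latt s α (fun _ => true) bv =
      latt s α (fun _ => true) bY ⊔ latt s α bY bv := by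
  have hvy : ∀ i, bv i ≤ bY i := fun i => le_trans (hvx i) (hxy i)
  -- Y_{w,y} ≤ Y_{w,v}
  have hwy_le : latt s α (fun _ => true) bY ≤ latt s α (fun _ => true) bv := by
    rw [latt, Submodule.span_le]
    rintro _ ⟨i, rfl⟩
    by_cases hb : bY i = true
    · have : betaD s α (fun _ => true) bY i = 0 := by
        simp [betaD, alphaD, hb]
      rw [this]; exact Submodule.zero_mem _
    · have hbv : bv i = false := by
        have := hvy i
        cases hbv : bv i
        · rfl
        · rw [hbv] at this
          cases hy : bY i
          · rw [hy] at this; exact absurd this (by decide)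
          · exact absurd hy hb
      have : betaD s α (fun _ => true) bY i = betaD s α (fun _ => true) bv i := by
        simp [betaD, alphaD, hb, hbv]
      rw [this]
      exact Submodule.subset_span ⟨i, rfl⟩
  apply le_antisymm
  · -- Y_{w,v} ≤ Y_{w,y} ⊔ Y_{y,v}
    rw [latt, Submodule.span_le]
    rintro _ ⟨i, rfl⟩
    by_cases hv : bv i = true
    · have : betaD s α (fun _ => true) bv i = 0 := by
        simp [betaD, alphaD, hv]
      rw [this]; exact Submodule.zero_mem _
    · have hv' : bv i = false := by simpa using hv
      by_cases hb : bY i = true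
      · -- β_{w,v,i} = (P_w α - P_y α) + β_{y,v,i}
        have hbeta : betaD s α (fun _ => true) bv i
            = (prefixProd s (fun _ => true) i (α i)
                - prefixProd s bY i (α i))
              + betaD s α bY bv i := by
          simp [betaD, alphaD, hv', hb]
        rw [hbeta]
        exact Submodule.add_mem _
          (Submodule.mem_sup_left (key' s α hrefl bY i (α i)))
          (Submodule.mem_sup_right (Submodule.subset_span ⟨i, rfl⟩))
      · -- β_{w,v,i} = β_{w,y,i}
        have : betaD s α (fun _ => true) bv i = betaD s α (fun _ => true) bY i := by
          simp [betaD, alphaD, hv', hb]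
        rw [this]
        exact Submodule.mem_sup_left (Submodule.subset_span ⟨i, rfl⟩)
  · apply sup_le hwy_le
    -- Y_{y,v} ≤ Y_{w,v}
    rw [latt, Submodule.span_le]
    rintro _ ⟨i, rfl⟩
    by_cases heq : bY i = bv i
    · have : betaD s α bY bv i = 0 := by simp [betaD, alphaD, heq]
      rw [this]; exact Submodule.zero_mem _
    · have hb : bY i = true := by
        cases hby : bY i
        · have := hvy i; rw [hby] at this
          have hv0 : bv i = false := by
            cases hv : bv i
            · rfl
            · rw [hv] at this; exact absurd this (by decide)
          rw [hby, hv0] at heq; exact absurd rfl heq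
        · rfl
      have hv' : bv i = false := by
        cases hbv : bv i
        · rfl
        · rw [hb, hbv] at heq; exact absurd rfl heq
      have hbeta : betaD s α bY bv i
          = betaD s α (fun _ => true) bv i
            - (prefixProd s (fun _ => true) i (α i)
                - prefixProd s bY i (α i)) := by
        simp [betaD, alphaD, hv', hb, heq]
      rw [hbeta]
      exact Submodule.sub_mem _
        (Submodule.subset_span ⟨i, rfl⟩)
        (hwy_le (key' s α hrefl bY i (α i)))

end DLStmt5
end

section
/- Let w be a sequence of elements of S̄ and θ a linear character of T^{wF} of order invertible in Λ. Let I(w,θ) be the set of sequences w′ ≤ w such that θ is trivial on N_w(Y_{w,w′}). Then I(w,θ) has a smallest element w_θ, given coordinatewise by replacing the i-th entry s_i of w by 1 exactly when θ(N_w(β^∨_{w,i})) = 1; moreover I(w,θ) = {x ∈ Σ(S̄) | w_θ ≤ x ≤ w}. -/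
open scoped Classical

/-! Setting as in the companion statements: `Y = Y(T)` is the cocharacter lattice of an
`F`-stable maximal torus `T` of a connected reductive group; a sequence
`w = (s₁, …, s_r) ∈ Σ(S̄)` is modelled by `ℤ`-linear endomorphisms `s i` of `Y`
satisfying `s i x - x ∈ ℤ • α i` (`α i` the coroot `α^∨_{w,i}`, `0` for trivial
entries); subsequences `w′ ≤ w` are Boolean masks.  The fixed-point group `T^{wF}` is an
(additively written) abelian group `T`, `N = N_w : Y(T) → T^{wF}` is the surjective norm
map, and a linear character `θ : T^{wF} → Λˣ` is an additive homomorphism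
`θ : T →+ Additive Λˣ` ("θ trivial on a set" = "θ vanishes on it"). -/

namespace DLStmt6

variable {Y : Type*} [AddCommGroup Y] [Module ℤ Y] {r : ℕ}

/-- The `i`-th entry of the masked sequence: `s i` if the mask is `true`, `1` otherwise. -/
def entry (s : Fin r → Module.End ℤ Y) (b : Fin r → Bool) (i : Fin r) : Module.End ℤ Y :=
  if b i then s i else 1

/-- The partial product `s₁ ⋯ s_{i-1}` of the masked sequence (first `i` entries). -/
def prefixProd (s : Fin r → Module.End ℤ Y) (b : Fin r → Bool) (i : Fin r) :
    Module.End ℤ Y :=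
  ((List.ofFn (entry s b)).take i).prod

/-- The product `s₁ ⋯ s_r` of the masked sequence, i.e. the action of the corresponding
Weyl group element on `Y(T)`. -/
def seqProd (s : Fin r → Module.End ℤ Y) (b : Fin r → Bool) : Module.End ℤ Y :=
  (List.ofFn (entry s b)).prod

/-- `α^∨_{w,v,i}`: the coroot `α i` if the `i`-th entries of the two masked sequences
differ, and `0` otherwise. -/
def alphaD (α : Fin r → Y) (bw bv : Fin r → Bool) (i : Fin r) : Y :=
  if bw i = bv i then 0 else α i

/-- `β^∨_{w,v,i} = s₁ ⋯ s_{i-1} (α^∨_{w,v,i})`. -/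
def betaD (s : Fin r → Module.End ℤ Y) (α : Fin r → Y) (bw bv : Fin r → Bool)
    (i : Fin r) : Y :=
  prefixProd s bw i (alphaD α bw bv i)

/-- The sublattice `Y_{w,v} ⊆ Y(T)` generated by the `β^∨_{w,v,i}`. -/
def latt (s : Fin r → Module.End ℤ Y) (α : Fin r → Y) (bw bv : Fin r → Bool) :
    Submodule ℤ Y :=
  Submodule.span ℤ (Set.range (betaD s α bw bv))

/-- The mask of `w_θ`: the `i`-th entry of `w` is replaced by `1` exactly when
`θ(N_w(β^∨_{w,i})) = 1` (here `β^∨_{w,i} = β^∨_{w,𝟙,i}` with `𝟙` the trivial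
subsequence, i.e. the all-`false` mask). -/
noncomputable def thetaMask {Λ : Type*} [CommRing Λ] {T : Type*} [AddCommGroup T]
    (s : Fin r → Module.End ℤ Y) (α : Fin r → Y) (N : Y →+ T)
    (θ : T →+ Additive Λˣ) : Fin r → Bool :=
  fun i =>
    if θ (N (betaD s α (fun _ => true) (fun _ => false) i)) = 0 then false else true

/-! The coordinates `i` with `b i = true` contribute `β^∨_{w,b,i} = 0` to `Y_{w,b}`, the others
contribute `β^∨_{w,i}`; so `θ ∘ N_w` kills `Y_{w,b}` iff `b` keeps every entry `i` with
`θ(N_w(β^∨_{w,i})) ≠ 1`, i.e. iff `w_θ ≤ b`. -/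

theorem map_eq_zero_of_mem_span_int {M : Type*} [AddCommGroup M] [Module ℤ M]
    {M' : Type*} [AddCommGroup M'] (φ : M →+ M') {S : Set M} (h : ∀ x ∈ S, φ x = 0)
    {x : M} (hx : x ∈ Submodule.span ℤ S) : φ x = 0 := by
  -- `toIntLinearMap` is linear for the canonical `ℤ`-module structure only
  obtain rfl : ‹Module ℤ M› = AddCommGroup.toIntModule M := Subsingleton.elim _ _
  exact (Submodule.span_le (p := LinearMap.ker φ.toIntLinearMap)).mpr h hx

theorem forall_mem_latt_map_eq_zero_iff {M : Type*} [AddCommGroup M] (φ : Y →+ M)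
    (s : Fin r → Module.End ℤ Y) (α : Fin r → Y) (bw bv : Fin r → Bool) :
    (∀ x ∈ latt s α bw bv, φ x = 0) ↔ ∀ i, φ (betaD s α bw bv i) = 0 :=
  ⟨fun h i => h _ (Submodule.subset_span ⟨i, rfl⟩),
    fun h _ => map_eq_zero_of_mem_span_int φ (by rintro _ ⟨i, rfl⟩; exact h i)⟩

section

variable (s : Fin r → Module.End ℤ Y) (α : Fin r → Y)

theorem betaD_of_eq {bw bv : Fin r → Bool} {i : Fin r} (h : bw i = bv i) :
    betaD s α bw bv i = 0 := by
  simp [betaD, alphaD, h]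

theorem betaD_congr_right {bw bv bv' : Fin r → Bool} {i : Fin r} (h : bv i = bv' i) :
    betaD s α bw bv i = betaD s α bw bv' i := by
  simp [betaD, alphaD, h]

theorem thetaMask_eq_false_iff {Λ : Type*} [CommRing Λ] {T : Type*} [AddCommGroup T]
    (N : Y →+ T) (θ : T →+ Additive Λˣ) (i : Fin r) :
    thetaMask s α N θ i = false ↔
      θ (N (betaD s α (fun _ => true) (fun _ => false) i)) = 0 := by
  simp [thetaMask]

theorem map_betaD_eq_zero_iff_thetaMask_le {Λ : Type*} [CommRing Λ] {T : Type*}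
    [AddCommGroup T] (N : Y →+ T) (θ : T →+ Additive Λˣ) (b : Fin r → Bool) (i : Fin r) :
    θ (N (betaD s α (fun _ => true) b i)) = 0 ↔ thetaMask s α N θ i ≤ b i := by
  cases hb : b i
  · rw [betaD_congr_right (bv' := fun _ => false) s α hb, ← thetaMask_eq_false_iff]
    exact le_bot_iff.symm
  · simp [betaD_of_eq (bw := fun _ => true) s α hb.symm]

end

theorem statement6_general {Λ : Type*} [CommRing Λ] {T : Type*} [AddCommGroup T]
    (s : Fin r → Module.End ℤ Y) (α : Fin r → Y)
    -- the norm map `N_w : Y(T) → T^{wF}` (surjective by Statement 1)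
    (N : Y →+ T)
    -- a linear character of `T^{wF}` of order invertible in `Λ`
    (θ : T →+ Additive Λˣ) :
    -- `w_θ` belongs to `I(w,θ)`:
    (∀ x ∈ latt s α (fun _ => true) (thetaMask s α N θ), θ (N x) = 0) ∧
    -- and `I(w,θ)` is exactly the set of `w′ ≤ w` with `w_θ ≤ w′`:
    (∀ b : Fin r → Bool,
      (∀ x ∈ latt s α (fun _ => true) b, θ (N x) = 0) ↔ ∀ i, thetaMask s α N θ i ≤ b i) := by
  have mem_I_iff : ∀ b : Fin r → Bool,
      (∀ x ∈ latt s α (fun _ => true) b, θ (N x) = 0) ↔ ∀ i, thetaMask s α N θ i ≤ b i :=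
    fun b => (forall_mem_latt_map_eq_zero_iff (θ.comp N) s α _ b).trans
      (forall_congr' (map_betaD_eq_zero_iff_thetaMask_le s α N θ b))
  exact ⟨(mem_I_iff _).mpr fun _ => le_rfl, mem_I_iff⟩

/-- Let `w` be a sequence of elements of `S̄` and `θ` a linear character of `T^{wF}` of
order invertible in `Λ`.  Let `I(w,θ)` be the set of sequences `w′ ≤ w` such that `θ`
is trivial on `N_w(Y_{w,w′})`.  Then `I(w,θ)` has a smallest element `w_θ`, given
coordinatewise by replacing the `i`-th entry `s_i` of `w` by `1` exactly when
`θ(N_w(β^∨_{w,i})) = 1`; moreover `I(w,θ) = {x ∈ Σ(S̄) | w_θ ≤ x ≤ w}`. -/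
theorem statement6 {Λ : Type*} [CommRing Λ] {T : Type*} [AddCommGroup T]
    (s : Fin r → Module.End ℤ Y) (α : Fin r → Y)
    (hrefl : ∀ (i : Fin r) (x : Y), ∃ n : ℤ, s i x - x = n • α i)
    (hα0 : ∀ i : Fin r, s i = 1 → α i = 0)
    -- the norm map `N_w : Y(T) → T^{wF}` (surjective by Statement 1)
    (N : Y →+ T) (hNsurj : Function.Surjective N)
    -- a linear character of `T^{wF}` of order invertible in `Λ`
    (θ : T →+ Additive Λˣ) (hord : IsUnit ((addOrderOf θ : ℕ) : Λ)) :
    -- `w_θ` belongs to `I(w,θ)`: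
    (∀ x ∈ latt s α (fun _ => true) (thetaMask s α N θ), θ (N x) = 0) ∧
    -- and `I(w,θ)` is exactly the set of `w′ ≤ w` with `w_θ ≤ w′`:
    (∀ b : Fin r → Bool,
      (∀ x ∈ latt s α (fun _ => true) b, θ (N x) = 0) ↔ ∀ i, thetaMask s α N θ i ≤ b i) :=
  statement6_general s α N θ

end DLStmt6
end

section
/- Let w be a sequence in S̄, θ a linear character of T^{wF}, and y ∈ I(w,θ). Let θ_y be the linear character of T^{yF} determined by θ_y ∘ N_y = θ ∘ N_w via the canonical isomorphism T^{wF}/N_w(Y_{w,w_θ}) ≅ T^{yF}/N_y(Y_{w,w_θ}). Then I(y,θ_y) = {w′ ∈ I(w,θ) | w_θ ≤ w′ ≤ y}; in other words, y_{θ_y} = w_θ. -/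
open scoped Classical

/-! Setting as in the companion statements: `Y = Y(T)` is the cocharacter lattice of an
`F`-stable maximal torus `T`; a sequence `w = (s₁, …, s_r) ∈ Σ(S̄)` is modelled by
`ℤ`-linear endomorphisms `s i` of `Y` satisfying `s i x - x ∈ ℤ • α i`; subsequences
are Boolean masks.  `I(w,θ)` is the set of masks `x ≤ w` such that `θ` is trivial on
`N_w(Y_{w,x})`, and `w_θ` is its smallest element.  For `y ∈ I(w,θ)`, the character
`θ_y` of `T^{yF}` is determined by `θ_y ∘ N_y = θ ∘ N_w` (via the canonical isomorphism
`T^{wF}/N_w(Y_{w,w_θ}) ≅ T^{yF}/N_y(Y_{w,w_θ})`); this identity is taken as the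
hypothesis `hcompat` below. -/

namespace DLStmt7

variable {Y : Type*} [AddCommGroup Y] [Module ℤ Y] {r : ℕ}

/-- The `i`-th entry of the masked sequence: `s i` if the mask is `true`, `1` otherwise. -/
def entry (s : Fin r → Module.End ℤ Y) (b : Fin r → Bool) (i : Fin r) : Module.End ℤ Y :=
  if b i then s i else 1

/-- The partial product `s₁ ⋯ s_{i-1}` of the masked sequence (first `i` entries). -/
def prefixProd (s : Fin r → Module.End ℤ Y) (b : Fin r → Bool) (i : Fin r) :
    Module.End ℤ Y :=
  ((List.ofFn (entry s b)).take i).prod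

/-- The product `s₁ ⋯ s_r` of the masked sequence, i.e. the action of the corresponding
Weyl group element on `Y(T)`. -/
def seqProd (s : Fin r → Module.End ℤ Y) (b : Fin r → Bool) : Module.End ℤ Y :=
  (List.ofFn (entry s b)).prod

/-- `α^∨_{w,v,i}`: the coroot `α i` if the `i`-th entries of the two masked sequences
differ, and `0` otherwise. -/
def alphaD (α : Fin r → Y) (bw bv : Fin r → Bool) (i : Fin r) : Y :=
  if bw i = bv i then 0 else α i

/-- `β^∨_{w,v,i} = s₁ ⋯ s_{i-1} (α^∨_{w,v,i})`. -/
def betaD (s : Fin r → Module.End ℤ Y) (α : Fin r → Y) (bw bv : Fin r → Bool)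
    (i : Fin r) : Y :=
  prefixProd s bw i (alphaD α bw bv i)

/-- The sublattice `Y_{w,v} ⊆ Y(T)` generated by the `β^∨_{w,v,i}`. -/
def latt (s : Fin r → Module.End ℤ Y) (α : Fin r → Y) (bw bv : Fin r → Bool) :
    Submodule ℤ Y :=
  Submodule.span ℤ (Set.range (betaD s α bw bv))

/-- The mask of `y_θ` for a masked subsequence `y ≤ w` (upper mask `bY`) and a character
`θ` pulled back to `Y(T)` through the norm map `N_y`: the `i`-th entry of `y` is
replaced by `1` exactly when `θ(N_y(β^∨_{y,i})) = 1`. -/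
noncomputable def thetaMaskRel {Λ : Type*} [CommRing Λ] {T : Type*} [AddCommGroup T]
    (s : Fin r → Module.End ℤ Y) (α : Fin r → Y) (bY : Fin r → Bool) (N : Y →+ T)
    (θ : T →+ Additive Λˣ) : Fin r → Bool :=
  fun i => if θ (N (betaD s α bY (fun _ => false) i)) = 0 then false else true

lemma span_kill {M : Type*} [AddCommGroup M] (g : Y →+ M) (S : Set Y)
    (h : ∀ a ∈ S, g a = 0) {x : Y} (hx : x ∈ Submodule.span ℤ S) : g x = 0 := by
  induction hx using Submodule.span_induction with
  | mem a ha => exact h a ha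
  | zero => simp
  | add a b _ _ ha hb => rw [map_add, ha, hb, add_zero]
  | smul n a _ ha =>
    exact (congrArg g (int_smul_eq_zsmul ‹Module ℤ Y› n a)).trans
      (by rw [map_zsmul, ha, smul_zero])

lemma prodTake_diff (s : Fin r → Module.End ℤ Y) (α : Fin r → Y)
    (hrefl : ∀ (i : Fin r) (x : Y), ∃ n : ℤ, s i x - x = n • α i)
    (bY : Fin r → Bool) :
    ∀ n : ℕ, n ≤ r → ∀ x : Y,
      ((List.ofFn (entry s (fun _ => true))).take n).prod x
        - ((List.ofFn (entry s bY)).take n).prod x ∈ latt s α (fun _ => true) bY := by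
  intro n
  induction n with
  | zero => intro _ x; simp
  | succ n ih =>
    intro hn x
    have hnr : n < r := hn
    have hp : ∀ b : Fin r → Bool, ((List.ofFn (entry s b)).take (n+1)).prod
        = ((List.ofFn (entry s b)).take n).prod * entry s b ⟨n, hnr⟩ := by
      intro b
      rw [List.take_succ]
      have : (List.ofFn (entry s b))[n]? = some (entry s b ⟨n, hnr⟩) := by
        rw [List.getElem?_eq_getElem (by simpa using hnr)]
        simp
      rw [this]
      simp
    rw [hp, hp]
    set P := ((List.ofFn (entry s (fun _ => true))).take n).prod
    set Q := ((List.ofFn (entry s bY)).take n).prod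
    have hP1 : entry s (fun _ => true) ⟨n, hnr⟩ = s ⟨n, hnr⟩ := by simp [entry]
    by_cases hb : bY ⟨n, hnr⟩ = true
    · have hQ1 : entry s bY ⟨n, hnr⟩ = s ⟨n, hnr⟩ := by simp [entry, hb]
      rw [hP1, hQ1]
      simpa [Module.End.mul_apply] using ih (le_of_lt hnr) (s ⟨n, hnr⟩ x)
    · have hQ1 : entry s bY ⟨n, hnr⟩ = 1 := by simp [entry, hb]
      rw [hP1, hQ1]
      obtain ⟨m, hm⟩ := hrefl ⟨n, hnr⟩ x
      have key : (P * s ⟨n, hnr⟩) x - (Q * 1) x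
          = P (s ⟨n, hnr⟩ x - x) + (P x - Q x) := by
        simp only [Module.End.mul_apply, Module.End.one_apply, map_sub]; abel
      rw [key]
      refine add_mem ?_ (ih (le_of_lt hnr) x)
      rw [hm, map_zsmul]
      refine zsmul_mem ?_ m
      have hbeta : betaD s α (fun _ => true) bY ⟨n, hnr⟩ = P (α ⟨n, hnr⟩) := by
        simp [betaD, alphaD, prefixProd, hb, P]
      rw [← hbeta]
      exact Submodule.subset_span ⟨⟨n, hnr⟩, rfl⟩

lemma prefix_diff (s : Fin r → Module.End ℤ Y) (α : Fin r → Y)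
    (hrefl : ∀ (i : Fin r) (x : Y), ∃ n : ℤ, s i x - x = n • α i)
    (bY : Fin r → Bool) (i : Fin r) (x : Y) :
    prefixProd s (fun _ => true) i x - prefixProd s bY i x
      ∈ latt s α (fun _ => true) bY :=
  prodTake_diff s α hrefl bY i i.isLt.le x

lemma betaD_diff (s : Fin r → Module.End ℤ Y) (α : Fin r → Y)
    (hrefl : ∀ (i : Fin r) (x : Y), ∃ n : ℤ, s i x - x = n • α i)
    (bY b : Fin r → Bool) (hb : ∀ i, b i ≤ bY i) (i : Fin r) :
    betaD s α (fun _ => true) b i - betaD s α bY b i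
      ∈ latt s α (fun _ => true) bY := by
  by_cases hbi : b i = true
  · have hbYi : bY i = true := le_antisymm (Bool.le_true _) (hbi ▸ hb i)
    simp [betaD, alphaD, hbi, hbYi]
  · simp only [Bool.not_eq_true] at hbi
    by_cases hbYi : bY i = true
    · have h1 : alphaD α (fun _ => true) b i = α i := by
        simp [alphaD, hbi]
      have h2 : alphaD α bY b i = α i := by
        simp [alphaD, hbi, hbYi]
      rw [betaD, betaD, h1, h2]
      exact prefix_diff s α hrefl bY i (α i)
    · simp only [Bool.not_eq_true] at hbYi
      have h1 : alphaD α (fun _ => true) b i = α i := by simp [alphaD, hbi]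
      have h2 : alphaD α bY b i = 0 := by simp [alphaD, hbi, hbYi]
      rw [betaD, betaD, h1, h2, map_zero, sub_zero]
      have hbeta : betaD s α (fun _ => true) bY i = prefixProd s (fun _ => true) i (α i) := by
        simp [betaD, alphaD, hbYi]
      rw [← hbeta]
      exact Submodule.subset_span ⟨i, rfl⟩

/-- Let `w` be a sequence in `S̄`, `θ` a linear character of `T^{wF}`, and `y ∈ I(w,θ)`.
Let `θ_y` be the linear character of `T^{yF}` determined by `θ_y ∘ N_y = θ ∘ N_w` via
the canonical isomorphism `T^{wF}/N_w(Y_{w,w_θ}) ≅ T^{yF}/N_y(Y_{w,w_θ})`.  Then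
`I(y,θ_y) = {w′ ∈ I(w,θ) | w_θ ≤ w′ ≤ y}`; in other words, `y_{θ_y} = w_θ`. -/
theorem statement7 {Λ : Type*} [CommRing Λ] {T Ty : Type*} [AddCommGroup T]
    [AddCommGroup Ty]
    (s : Fin r → Module.End ℤ Y) (α : Fin r → Y)
    (hrefl : ∀ (i : Fin r) (x : Y), ∃ n : ℤ, s i x - x = n • α i)
    (hα0 : ∀ i : Fin r, s i = 1 → α i = 0)
    -- the norm maps `N_w : Y(T) → T^{wF}` and `N_y : Y(T) → T^{yF}`
    (N : Y →+ T) (hNsurj : Function.Surjective N)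
    (Ny : Y →+ Ty) (hNysurj : Function.Surjective Ny)
    -- the characters `θ` of `T^{wF}` and `θ_y` of `T^{yF}`, of order invertible in `Λ`
    (θ : T →+ Additive Λˣ) (hord : IsUnit ((addOrderOf θ : ℕ) : Λ))
    (θy : Ty →+ Additive Λˣ) (hordy : IsUnit ((addOrderOf θy : ℕ) : Λ))
    -- `θ_y ∘ N_y = θ ∘ N_w`
    (hcompat : ∀ x : Y, θy (Ny x) = θ (N x))
    -- the mask of `y`, with `y ∈ I(w,θ)`, i.e. `θ` trivial on `N_w(Y_{w,y})`
    (bY : Fin r → Bool)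
    (hyI : ∀ x ∈ latt s α (fun _ => true) bY, θ (N x) = 0) :
    -- `I(y,θ_y)` consists exactly of those `w′ ≤ y` lying in `I(w,θ)`:
    (∀ b : Fin r → Bool, (∀ i, b i ≤ bY i) →
      ((∀ x ∈ latt s α bY b, θy (Ny x) = 0) ↔
        (∀ x ∈ latt s α (fun _ => true) b, θ (N x) = 0))) ∧
    -- in other words `y_{θ_y} = w_θ`:
    thetaMaskRel s α bY Ny θy = thetaMaskRel s α (fun _ => true) N θ := by
  set g : Y →+ Additive Λˣ := θ.comp N with hg
  set gy : Y →+ Additive Λˣ := θy.comp Ny with hgy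
  have hgyg : ∀ x : Y, gy x = g x := hcompat
  have hgL : ∀ x ∈ latt s α (fun _ => true) bY, g x = 0 := hyI
  -- key: g agrees on the two betas
  have hkey : ∀ (b : Fin r → Bool), (∀ i, b i ≤ bY i) → ∀ i : Fin r,
      g (betaD s α (fun _ => true) b i) = g (betaD s α bY b i) := by
    intro b hb i
    have hd := betaD_diff s α hrefl bY b hb i
    have : g (betaD s α (fun _ => true) b i - betaD s α bY b i) = 0 :=
      hgL _ hd
    rw [map_sub, sub_eq_zero] at this
    exact this
  constructor
  · intro b hb
    constructor
    · intro h1 x hx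
      refine span_kill g _ ?_ hx
      rintro a ⟨i, rfl⟩
      rw [hkey b hb i, ← hgyg]
      exact h1 _ (Submodule.subset_span ⟨i, rfl⟩)
    · intro h1 x hx
      refine span_kill gy _ ?_ hx
      rintro a ⟨i, rfl⟩
      rw [hgyg, ← hkey b hb i]
      exact h1 _ (Submodule.subset_span ⟨i, rfl⟩)
  · funext i
    have hb : ∀ j, (fun _ : Fin r => false) j ≤ bY j := fun j => Bool.false_le _
    have := hkey (fun _ => false) hb i
    simp only [thetaMaskRel]
    rw [show θy (Ny (betaD s α bY (fun _ => false) i))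
        = θ (N (betaD s α (fun _ => true) (fun _ => false) i)) by
      have h2 := hgyg (betaD s α bY (fun _ => false) i)
      simp only [hg, hgy, AddMonoidHom.comp_apply] at h2 this
      rw [h2, ← this]]

end DLStmt7
end
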